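/- arXiv:2506.20072 — 2 statements merged into one kernel-verified Lean document; each statement's English description precedes it below -/
import Mathlib

section
/- Let G be a finite simple graph in which every vertex has degree at least δ, where δ ≥ 1, let J be a δ-regular spanning subgraph of G with h edges, and let uv be an edge of J. Writing Δ(u) = deg_G(u) − δ, the probability that J ⊆ G_ω, e_{k(ω)} = uv, and u has degree exactly δ in G_ω equals (h−1)! · Δ(u)! / (h + Δ(u))!, which equals (1/h) · 1/binom(h+Δ(u), h). -/
/-!
Let `p` be the position of `x = uv` in `ω`. The event holds exactly when the set `B` of the other
edges of `J` comes before `x` and the set `C` of edges of `G` at `u` outside `J` comes after `x`: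
then the first `p + 1` edges contain the `δ`-regular graph `J`, while `u` has degree only `δ - 1`
among the first `p` edges, so `k(ω) = p + 1` and `u` has degree exactly `δ` in `G_ω`.

For any disjoint `B`, `C` and `x ∉ B ∪ C`, the orderings placing `B` before `x` before `C` have
density `|B|! |C|! / (|B| + |C| + 1)!`: the relative order of `A = B ∪ {x} ∪ C` is uniformly
distributed (precomposing with permutations of `A` permutes the fibers), and `|B|! |C|!` of the
orders of `A` put `B` first, then `x`, then `C`. Here `|B| = h - 1` and `|C| = deg_G(u) - δ`.
-/

open Finset

/-- The degree of a vertex `v` in the graph whose edge set is the finite set `s`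
of edges (elements of `Sym2 V`). -/
def degIn {V : Type*} [DecidableEq V] (s : Finset (Sym2 V)) (v : V) : ℕ :=
  (s.filter (fun e => v ∈ e)).card

/-- Given an ordering `ω` of a finite set `s` of edges, the set consisting of the
first `i` edges `e_{ω(1)}, …, e_{ω(i)}`. -/
def prefixEdges {V : Type*} [DecidableEq V] {s : Finset (Sym2 V)}
    (ω : Fin s.card ≃ {e : Sym2 V // e ∈ s}) (i : ℕ) : Finset (Sym2 V) :=
  (Finset.univ.filter (fun j : Fin s.card => (j : ℕ) < i)).image (fun j => (ω j : Sym2 V))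

/-- `k(ω)`: the least `i` such that every vertex has degree at least `δ` in the graph
formed by the first `i` edges of the ordering `ω`. -/
noncomputable def stopIndex {V : Type*} [Fintype V] [DecidableEq V] (δ : ℕ)
    {s : Finset (Sym2 V)} (ω : Fin s.card ≃ {e : Sym2 V // e ∈ s}) : ℕ :=
  sInf {i | ∀ v : V, δ ≤ degIn (prefixEdges ω i) v}

/-- The edge set of `G_ω`, i.e. the first `k(ω)` edges of the ordering `ω`. -/
noncomputable def finalEdges {V : Type*} [Fintype V] [DecidableEq V] (δ : ℕ)
    {s : Finset (Sym2 V)} (ω : Fin s.card ≃ {e : Sym2 V // e ∈ s}) : Finset (Sym2 V) :=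
  prefixEdges ω (stopIndex δ ω)

/-- A graph is `δ`-regular: every vertex has exactly `δ` neighbours. -/
def regOfDegree {V : Type*} (J : SimpleGraph V) (δ : ℕ) : Prop :=
  ∀ v : V, (J.neighborSet v).ncard = δ

/-- `e` is the last edge `e_{k(ω)}` of `G_ω`: it belongs to the first `k(ω)` edges but
not to the first `k(ω) − 1` edges. -/
noncomputable def lastEdgeIs {V : Type*} [Fintype V] [DecidableEq V] (δ : ℕ)
    {s : Finset (Sym2 V)} (ω : Fin s.card ≃ {e : Sym2 V // e ∈ s}) (e : Sym2 V) : Prop :=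
  e ∈ prefixEdges ω (stopIndex δ ω) ∧ e ∉ prefixEdges ω (stopIndex δ ω - 1)

lemma equiv_fin_eq_of_forall_lt_iff {α : Type*} {k : ℕ} {u v : α ≃ Fin k}
    (h : ∀ y z, u y < u z ↔ v y < v z) : u = v := by
  have hmono : StrictMono (u.symm.trans v) := fun i j hij => by simpa [← h] using hij
  have hid : ⇑(u.symm.trans v) = id := (hmono.range_inj strictMono_id).1 (by simp)
  exact Equiv.ext fun y => by simpa using (congrFun hid (u y)).symm

section RelativeOrder
variable {β : Type*} {n : ℕ}

noncomputable def relOrder (A : Finset β) (g : β ≃ Fin n) : {y // y ∈ A} ≃ Fin #A :=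
  (g.subtypeEquiv fun _ => (mem_map' g.toEmbedding).symm).trans
    ((A.map g.toEmbedding).orderIsoOfFin (card_map _)).symm.toEquiv

lemma relOrder_lt_relOrder_iff (A : Finset β) (g : β ≃ Fin n) {y z : {y // y ∈ A}} :
    relOrder A g y < relOrder A g z ↔ g y < g z := by
  simp only [relOrder, Equiv.trans_apply, RelIso.coe_fn_toEquiv, OrderIso.lt_iff_lt]
  rfl

variable [DecidableEq β]

lemma relOrder_ofSubtype_trans (A : Finset β) (g : β ≃ Fin n) (τ : Equiv.Perm {y // y ∈ A}) :
    relOrder A ((Equiv.Perm.ofSubtype τ).trans g) = τ.trans (relOrder A g) :=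
  equiv_fin_eq_of_forall_lt_iff fun y z => by
    simp only [relOrder_lt_relOrder_iff, Equiv.trans_apply,
      Equiv.Perm.ofSubtype_apply_of_mem τ y.2, Equiv.Perm.ofSubtype_apply_of_mem τ z.2]

variable [Fintype β]

lemma card_relOrder_fiber_eq (A : Finset β) (π₁ π₂ : {y // y ∈ A} ≃ Fin #A) :
    #{g : β ≃ Fin n | relOrder A g = π₁} = #{g : β ≃ Fin n | relOrder A g = π₂} := by
  set τ := π₂.trans π₁.symm
  refine card_equiv (Equiv.equivCongr (Equiv.Perm.ofSubtype τ).symm (Equiv.refl _)) fun g => ?_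
  have hτ : Equiv.equivCongr (Equiv.Perm.ofSubtype τ).symm (Equiv.refl _) g =
      (Equiv.Perm.ofSubtype τ).trans g := rfl
  simp only [mem_filter, mem_univ, true_and, hτ, relOrder_ofSubtype_trans,
    Equiv.trans_cancel_left]
  simp [τ, Equiv.trans_assoc]

lemma card_filter_relOrder (A : Finset β) (P : ({y // y ∈ A} ≃ Fin #A) → Prop)
    [DecidablePred P] (π₀ : {y // y ∈ A} ≃ Fin #A) :
    #{g : β ≃ Fin n | P (relOrder A g)} =
      #{π | P π} * #{g : β ≃ Fin n | relOrder A g = π₀} := by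
  rw [card_eq_sum_card_fiberwise (f := relOrder A) (t := {π | P π}) (by intro g; simp)]
  refine sum_const_nat fun π hπ => ?_
  rw [filter_filter, ← card_relOrder_fiber_eq A π π₀]
  congr 1
  refine filter_congr fun g _ => ⟨And.right, ?_⟩
  rintro rfl
  exact ⟨by simpa using hπ, rfl⟩

theorem card_filter_relOrder_mul (A : Finset β) (P : ({y // y ∈ A} ≃ Fin #A) → Prop)
    [DecidablePred P] (hn : Fintype.card β = n) :
    #{g : β ≃ Fin n | P (relOrder A g)} * (#A).factorial = n.factorial * #{π | P π} := by
  let π₀ : {y // y ∈ A} ≃ Fin #A := A.equivFin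
  have htotal := card_filter_relOrder A (fun _ => True) π₀ (n := n)
  simp only [filter_true, card_univ, Fintype.card_equiv π₀, Fintype.card_coe,
    Fintype.card_equiv (Fintype.equivFinOfCardEq hn), hn] at htotal
  rw [card_filter_relOrder A P π₀, htotal]
  ring

end RelativeOrder

theorem card_equiv_comp_eq {α β ι : Type*} [Fintype α] [Fintype β] [DecidableEq α]
    [DecidableEq β] [Fintype ι] [DecidableEq ι] {f : α → ι} {g : β → ι}
    (hfg : ∀ i, Fintype.card {a // f a = i} = Fintype.card {b // g b = i}) :
    Fintype.card {e : α ≃ β // g ∘ e = f} = ∏ i, (Fintype.card {a // f a = i}).factorial := by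
  let e₀ : α ≃ β := Equiv.ofFiberEquiv fun i => Fintype.equivOfCardEq (hfg i)
  have he₀ (b : β) : f (e₀.symm b) = g b := by
    conv_rhs => rw [← e₀.apply_symm_apply b]
    exact (Equiv.ofFiberEquiv_map _ _).symm
  rw [← DomMulAct.stabilizer_card f]
  refine Fintype.card_congr (Equiv.subtypeEquiv (Equiv.equivCongr (Equiv.refl α) e₀.symm)
    fun e => ?_)
  have hcomp : f ∘ (Equiv.equivCongr (Equiv.refl α) e₀.symm e) = g ∘ e := by
    funext a
    exact he₀ (e a)
  rw [hcomp]

lemma card_fin_compare_eq {N b : ℕ} (hb : b < N) :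
    Fintype.card {i : Fin N // compare (i : ℕ) b = .lt} = b ∧
      Fintype.card {i : Fin N // compare (i : ℕ) b = .eq} = 1 ∧
      Fintype.card {i : Fin N // compare (i : ℕ) b = .gt} = N - 1 - b := by
  simp only [Fintype.card_subtype, compare_lt_iff_lt, compare_eq_iff_eq, compare_gt_iff_gt]
  refine ⟨?_, card_eq_one.2 ⟨⟨b, hb⟩, ?_⟩, ?_⟩
  · convert Fin.card_Iio (⟨b, hb⟩ : Fin N) using 2; ext i; simp [Fin.lt_def]
  · ext i; simp [Fin.ext_iff]
  · convert Fin.card_Ioi (⟨b, hb⟩ : Fin N) using 2; ext i; simp [Fin.lt_def]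

section OrderPatterns
variable {γ : Type*} [DecidableEq γ] {B C : Finset γ} {x : γ}

def sideOf (B C : Finset γ) (y : γ) : Ordering :=
  if y ∈ B then .lt else if y ∈ C then .gt else .eq

variable [Fintype γ]

lemma card_eq_card_add_one_add_card (hxB : x ∉ B) (hxC : x ∉ C) (hBC : Disjoint B C)
    (hcover : ∀ y, y = x ∨ y ∈ B ∨ y ∈ C) : Fintype.card γ = #B + 1 + #C := by
  have huniv : (univ : Finset γ) = insert x (B ∪ C) := by
    ext y
    simpa using hcover y
  rw [← card_univ, huniv, card_insert_of_notMem (by simp [hxB, hxC]),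
    card_union_of_disjoint hBC]
  omega

lemma card_sideOf_eq (hxB : x ∉ B) (hxC : x ∉ C) (hBC : Disjoint B C)
    (hcover : ∀ y, y = x ∨ y ∈ B ∨ y ∈ C) :
    Fintype.card {y // sideOf B C y = .lt} = #B ∧ Fintype.card {y // sideOf B C y = .eq} = 1 ∧
      Fintype.card {y // sideOf B C y = .gt} = #C := by
  have hCB : ∀ y ∈ C, y ∉ B := fun y hy hyB => disjoint_left.1 hBC hyB hy
  simp only [Fintype.card_subtype]
  refine ⟨congrArg card ?_, card_eq_one.2 ⟨x, ?_⟩, congrArg card ?_⟩ <;> ext y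
  · by_cases hy : y ∈ B <;> simp [sideOf, hy]
  · rcases hcover y with rfl | hy | hy
    · simp [sideOf, hxB, hxC]
    · simp [sideOf, hy, ne_of_mem_of_not_mem hy hxB]
    · simp [sideOf, hy, hCB y hy, ne_of_mem_of_not_mem hy hxC]
  · by_cases hy : y ∈ C
    · simp [sideOf, hy, hCB y hy]
    · by_cases hy' : y ∈ B <;> simp [sideOf, hy, hy']

variable {N : ℕ}

lemma val_eq_card_of_forall_lt (hN : Fintype.card γ = N) (hxB : x ∉ B) (hxC : x ∉ C)
    (hBC : Disjoint B C) (hcover : ∀ y, y = x ∨ y ∈ B ∨ y ∈ C) {π : γ ≃ Fin N}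
    (hB : ∀ y ∈ B, π y < π x) (hC : ∀ y ∈ C, π x < π y) : (π x : ℕ) = #B := by
  have hlo : #B ≤ π x := by
    have : B.map π.toEmbedding ⊆ Iio (π x) := fun i hi => by
      obtain ⟨y, hy, rfl⟩ := mem_map.1 hi
      simpa using hB y hy
    simpa using card_le_card this
  have hhi : #C ≤ N - 1 - π x := by
    have : C.map π.toEmbedding ⊆ Ioi (π x) := fun i hi => by
      obtain ⟨y, hy, rfl⟩ := mem_map.1 hi
      simpa using hC y hy
    simpa using card_le_card this
  have := card_eq_card_add_one_add_card hxB hxC hBC hcover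
  omega

lemma forall_lt_and_forall_lt_iff (hN : Fintype.card γ = N) (hxB : x ∉ B) (hxC : x ∉ C)
    (hBC : Disjoint B C) (hcover : ∀ y, y = x ∨ y ∈ B ∨ y ∈ C) (π : γ ≃ Fin N) :
    ((∀ y ∈ B, π y < π x) ∧ ∀ y ∈ C, π x < π y) ↔
      (fun i : Fin N => compare (i : ℕ) #B) ∘ π = sideOf B C := by
  have hCB : ∀ y ∈ C, y ∉ B := fun y hy hyB => disjoint_left.1 hBC hyB hy
  constructor
  · rintro ⟨hB, hC⟩
    have hx := val_eq_card_of_forall_lt hN hxB hxC hBC hcover hB hC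
    funext y
    rcases hcover y with rfl | hy | hy
    · simp [sideOf, hxB, hxC, hx]
    · simp only [Function.comp_apply, sideOf, hy, if_true]
      rw [← hx, compare_lt_iff_lt]
      exact hB y hy
    · simp only [Function.comp_apply, sideOf, hy, hCB y hy, if_true, if_false]
      rw [← hx, compare_gt_iff_gt]
      exact hC y hy
  · intro h
    have hy (y : γ) : compare (π y : ℕ) #B = sideOf B C y := congrFun h y
    have hx : (π x : ℕ) = #B := by simpa [sideOf, hxB, hxC] using hy x
    refine ⟨fun y hyB => ?_, fun y hyC => ?_⟩
    · simpa [Fin.lt_def, hx, sideOf, hyB, compare_lt_iff_lt] using hy y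
    · simpa [Fin.lt_def, hx, sideOf, hyC, hCB y hyC, compare_gt_iff_gt] using hy y

theorem card_filter_forall_lt_and_forall_lt (hN : Fintype.card γ = N) (hxB : x ∉ B)
    (hxC : x ∉ C) (hBC : Disjoint B C) (hcover : ∀ y, y = x ∨ y ∈ B ∨ y ∈ C) :
    #{π : γ ≃ Fin N | (∀ y ∈ B, π y < π x) ∧ ∀ y ∈ C, π x < π y} =
      (#B).factorial * (#C).factorial := by
  have hcard := card_eq_card_add_one_add_card hxB hxC hBC hcover
  obtain ⟨hlt, heq, hgt⟩ := card_sideOf_eq hxB hxC hBC hcover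
  obtain ⟨hlt', heq', hgt'⟩ := card_fin_compare_eq (N := N) (b := #B) (by omega)
  have hfib : ∀ o, Fintype.card {y // sideOf B C y = o} =
      Fintype.card {i : Fin N // compare (i : ℕ) #B = o} := by
    rintro (_ | _ | _) <;> omega
  rw [← Fintype.card_subtype, Fintype.card_congr (Equiv.subtypeEquivRight
    (forall_lt_and_forall_lt_iff hN hxB hxC hBC hcover)), card_equiv_comp_eq hfib,
    show (univ : Finset Ordering) = {.lt, .eq, .gt} from rfl]
  simp [hlt, heq, hgt]

end OrderPatterns

section Orderings
variable {β : Type*} [Fintype β] [DecidableEq β] {n : ℕ} {B C : Finset β} {x : β}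

lemma card_filter_forall_lt_and_forall_lt_mul (hn : Fintype.card β = n) (hxB : x ∉ B)
    (hxC : x ∉ C) (hBC : Disjoint B C) :
    #{g : β ≃ Fin n | (∀ y ∈ B, g y < g x) ∧ ∀ y ∈ C, g x < g y} * (#B + 1 + #C).factorial =
      n.factorial * ((#B).factorial * (#C).factorial) := by
  set A := insert x (B ∪ C)
  have hBA : B ⊆ A := fun y hy => by simp [A, hy]
  have hCA : C ⊆ A := fun y hy => by simp [A, hy]
  have hsub {D : Finset β} (hD : D ⊆ A) : #(D.subtype (· ∈ A)) = #D := by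
    rw [card_subtype, filter_true_of_mem hD]
  have hA : #A = #B + 1 + #C := by
    rw [card_insert_of_notMem (by simp [hxB, hxC]), card_union_of_disjoint hBC]
    omega
  let x' : {y // y ∈ A} := ⟨x, mem_insert_self _ _⟩
  let P : ({y // y ∈ A} ≃ Fin #A) → Prop := fun π =>
    (∀ y ∈ B.subtype (· ∈ A), π y < π x') ∧ ∀ y ∈ C.subtype (· ∈ A), π x' < π y
  have hfav (g : β ≃ Fin n) :
      ((∀ y ∈ B, g y < g x) ∧ ∀ y ∈ C, g x < g y) ↔ P (relOrder A g) := by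
    simp only [P, relOrder_lt_relOrder_iff, mem_subtype, Subtype.forall]
    exact ⟨fun h => ⟨fun y _ hy => h.1 y hy, fun y _ hy => h.2 y hy⟩,
      fun h => ⟨fun y hy => h.1 y (hBA hy) hy, fun y hy => h.2 y (hCA hy) hy⟩⟩
  have hcover (y : {y // y ∈ A}) :
      y = x' ∨ y ∈ B.subtype (· ∈ A) ∨ y ∈ C.subtype (· ∈ A) := by
    simp only [x', Subtype.ext_iff, mem_subtype]
    exact (mem_insert.1 y.2).imp_right mem_union.1
  have hpatterns : #{π | P π} = (#B).factorial * (#C).factorial := by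
    rw [← hsub hBA, ← hsub hCA]
    exact card_filter_forall_lt_and_forall_lt (Fintype.card_coe A) (by simpa [x'] using hxB)
      (by simpa [x'] using hxC) (disjoint_left.2 fun y hyB hyC =>
        disjoint_left.1 hBC (mem_subtype.1 hyB) (mem_subtype.1 hyC)) hcover
  rw [filter_congr fun g _ => hfav g, ← hA, card_filter_relOrder_mul A P hn, hpatterns]

theorem card_orderings_forall_lt_and_forall_lt_mul (hn : Fintype.card β = n) (hxB : x ∉ B)
    (hxC : x ∉ C) (hBC : Disjoint B C) :
    #{ω : Fin n ≃ β | (∀ y ∈ B, ω.symm y < ω.symm x) ∧ ∀ y ∈ C, ω.symm x < ω.symm y} *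
        (#B + 1 + #C).factorial =
      n.factorial * ((#B).factorial * (#C).factorial) := by
  rw [card_equiv (Equiv.symmEquiv _ _)
    (t := {g : β ≃ Fin n | (∀ y ∈ B, g y < g x) ∧ ∀ y ∈ C, g x < g y}) (by simp)]
  exact card_filter_forall_lt_and_forall_lt_mul hn hxB hxC hBC

end Orderings

section StoppingTime
variable {V : Type*} [DecidableEq V] {s : Finset (Sym2 V)} (ω : Fin s.card ≃ {e // e ∈ s})

lemma mem_prefixEdges_iff {e : Sym2 V} {i : ℕ} :
    e ∈ prefixEdges ω i ↔ ∃ he : e ∈ s, (ω.symm ⟨e, he⟩ : ℕ) < i := by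
  simp only [prefixEdges, mem_image, mem_filter, mem_univ, true_and]
  constructor
  · rintro ⟨j, hj, rfl⟩
    exact ⟨(ω j).2, by simpa using hj⟩
  · rintro ⟨he, hlt⟩
    exact ⟨ω.symm ⟨e, he⟩, hlt, by simp⟩

lemma coe_mem_prefixEdges_iff {e : {e // e ∈ s}} {i : ℕ} :
    (e : Sym2 V) ∈ prefixEdges ω i ↔ (ω.symm e : ℕ) < i := by
  simp [mem_prefixEdges_iff]

lemma prefixEdges_mono : Monotone (prefixEdges ω) := fun _ _ hij _ he => by
  obtain ⟨hes, hlt⟩ := (mem_prefixEdges_iff ω).1 he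
  exact (mem_prefixEdges_iff ω).2 ⟨hes, hlt.trans_le hij⟩

lemma degIn_mono {t t' : Finset (Sym2 V)} (h : t ⊆ t') (v : V) : degIn t v ≤ degIn t' v :=
  card_le_card (filter_subset_filter _ h)

lemma degIn_lt_degIn {t t' : Finset (Sym2 V)} (h : t ⊆ t') {e : Sym2 V} (he : e ∈ t')
    (he' : e ∉ t) {v : V} (hv : v ∈ e) : degIn t v < degIn t' v :=
  card_lt_card ⟨filter_subset_filter _ h,
    fun hsub => he' (mem_filter.1 (hsub (mem_filter.2 ⟨he, hv⟩))).1⟩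

variable [Fintype V] {δ : ℕ}

lemma stopIndex_eq_succ (i : Fin s.card) (hmin : ∀ w, δ ≤ degIn (prefixEdges ω (i + 1)) w)
    {u : V} (hu : u ∈ (ω i : Sym2 V)) (hdeg : degIn (prefixEdges ω (i + 1)) u = δ) :
    stopIndex δ ω = i + 1 := by
  refine le_antisymm (Nat.sInf_le hmin) (le_csInf ⟨_, hmin⟩ fun j hj => ?_)
  by_contra! hji
  have hlt : degIn (prefixEdges ω j) u < degIn (prefixEdges ω (i + 1)) u :=
    degIn_lt_degIn (prefixEdges_mono ω hji.le) ((coe_mem_prefixEdges_iff ω).2 (by simp))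
      (fun h => by simp [coe_mem_prefixEdges_iff] at h; omega) hu
  have := hj u
  omega

lemma lastEdgeIs_iff (e : {e // e ∈ s}) :
    lastEdgeIs δ ω e ↔ stopIndex δ ω = ω.symm e + 1 := by
  simp only [lastEdgeIs, coe_mem_prefixEdges_iff]
  omega

end StoppingTime

section Graph
variable {V : Type*} [Fintype V] [DecidableEq V] {J : SimpleGraph V} [DecidableRel J.Adj]
  {δ : ℕ} {u : V}

lemma degIn_edgeFinset (v : V) : degIn J.edgeFinset v = J.degree v := by
  rw [degIn, ← J.incidenceFinset_eq_filter, J.card_incidenceFinset_eq_degree]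

lemma mem_incidenceFinset_iff {e : Sym2 V} {v : V} :
    e ∈ J.incidenceFinset v ↔ e ∈ J.edgeSet ∧ v ∈ e := by
  rw [J.incidenceFinset_eq_filter, mem_filter, SimpleGraph.mem_edgeFinset]

section Prefix
variable {s : Finset (Sym2 V)} (ω : Fin s.card ≃ {e // e ∈ s}) {x : {e // e ∈ s}}

lemma lastEdgeIs_and_degIn_iff_prefixEdges (hJ : J.IsRegularOfDegree δ)
    (hu : u ∈ (x : Sym2 V)) :
    (J.edgeSet ⊆ ↑(finalEdges δ ω) ∧ lastEdgeIs δ ω x ∧ degIn (finalEdges δ ω) u = δ) ↔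
      J.edgeSet ⊆ ↑(prefixEdges ω (ω.symm x + 1)) ∧
        degIn (prefixEdges ω (ω.symm x + 1)) u = δ := by
  rw [lastEdgeIs_iff]
  constructor
  · rintro ⟨hJsub, hk, hdeg⟩
    rw [finalEdges, hk] at hJsub hdeg
    exact ⟨hJsub, hdeg⟩
  · rintro ⟨hJsub, hdeg⟩
    have hmin (w : V) : δ ≤ degIn (prefixEdges ω (ω.symm x + 1)) w := by
      rw [← hJ.degree_eq w, ← degIn_edgeFinset]
      exact degIn_mono (fun e he => hJsub (SimpleGraph.mem_edgeFinset.1 he)) w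
    have hk := stopIndex_eq_succ ω (ω.symm x) hmin (by simpa using hu) hdeg
    rw [finalEdges, hk]
    exact ⟨hJsub, rfl, hdeg⟩

lemma edgeSet_subset_prefixEdges_iff (hJs : J.edgeSet ⊆ ↑s) :
    J.edgeSet ⊆ ↑(prefixEdges ω (ω.symm x + 1)) ↔
      ∀ y ∈ (J.edgeFinset.erase x).subtype (· ∈ s), ω.symm y < ω.symm x := by
  constructor
  · intro hsub y hy
    rw [mem_subtype, mem_erase, SimpleGraph.mem_edgeFinset] at hy
    have hle := (coe_mem_prefixEdges_iff ω).1 (hsub hy.2)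
    have hne : (ω.symm y : ℕ) ≠ ω.symm x := fun h =>
      hy.1 (congrArg Subtype.val (ω.symm.injective (Fin.ext h)))
    rw [Fin.lt_def]
    omega
  · intro h e he
    let y : {e // e ∈ s} := ⟨e, hJs he⟩
    change (y : Sym2 V) ∈ prefixEdges ω _
    rw [coe_mem_prefixEdges_iff]
    by_cases hyx : y = x
    · simp [hyx]
    · have := h y (mem_subtype.2 (mem_erase.2
        ⟨fun h => hyx (Subtype.ext h), SimpleGraph.mem_edgeFinset.2 he⟩))
      rw [Fin.lt_def] at this
      omega

end Prefix

variable {G : SimpleGraph V} [DecidableRel G.Adj]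

lemma degIn_prefixEdges_eq_iff (ω : Fin #G.edgeFinset ≃ {e // e ∈ G.edgeFinset})
    (hJ : J.IsRegularOfDegree δ) {i : ℕ} (hsub : J.edgeSet ⊆ ↑(prefixEdges ω i)) :
    degIn (prefixEdges ω i) u = δ ↔
      ∀ y ∈ (G.incidenceFinset u \ J.incidenceFinset u).subtype (· ∈ G.edgeFinset),
        i ≤ ω.symm y := by
  have hJu : J.incidenceFinset u ⊆ (prefixEdges ω i).filter (u ∈ ·) := fun e he => by
    rw [mem_incidenceFinset_iff] at he
    exact mem_filter.2 ⟨hsub he.1, he.2⟩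
  have hcardJ : #(J.incidenceFinset u) = δ := by
    rw [J.card_incidenceFinset_eq_degree, hJ.degree_eq]
  have hdeg : degIn (prefixEdges ω i) u = δ ↔
      (prefixEdges ω i).filter (u ∈ ·) ⊆ J.incidenceFinset u := by
    rw [degIn, ← hcardJ]
    exact ⟨fun h => (eq_of_subset_of_card_le hJu h.le).ge,
      fun h => (card_le_card h).antisymm (card_le_card hJu)⟩
  rw [hdeg]
  constructor
  · intro h y hy
    rw [mem_subtype, mem_sdiff] at hy
    by_contra! hlt
    have hyu := (mem_incidenceFinset_iff.1 hy.1).2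
    exact hy.2 (h (mem_filter.2 ⟨(coe_mem_prefixEdges_iff ω).2 hlt, hyu⟩))
  · intro h e he
    obtain ⟨hep, heu⟩ := mem_filter.1 he
    obtain ⟨hes, hlt⟩ := (mem_prefixEdges_iff ω).1 hep
    by_contra heJ
    have := h ⟨e, hes⟩ (mem_subtype.2 (mem_sdiff.2
      ⟨mem_incidenceFinset_iff.2 ⟨SimpleGraph.mem_edgeFinset.1 hes, heu⟩, heJ⟩))
    omega

lemma lastEdgeIs_and_degIn_iff_forall_lt (hJG : J ≤ G) (hJ : J.IsRegularOfDegree δ)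
    (ω : Fin #G.edgeFinset ≃ {e // e ∈ G.edgeFinset}) {x : {e // e ∈ G.edgeFinset}}
    (hu : u ∈ (x : Sym2 V)) :
    (J.edgeSet ⊆ ↑(finalEdges δ ω) ∧ lastEdgeIs δ ω x ∧ degIn (finalEdges δ ω) u = δ) ↔
      (∀ y ∈ (J.edgeFinset.erase x).subtype (· ∈ G.edgeFinset), ω.symm y < ω.symm x) ∧
        ∀ y ∈ (G.incidenceFinset u \ J.incidenceFinset u).subtype (· ∈ G.edgeFinset),
          ω.symm x < ω.symm y := by
  have hJs : J.edgeSet ⊆ ↑G.edgeFinset := by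
    rw [SimpleGraph.coe_edgeFinset]
    exact SimpleGraph.edgeSet_mono hJG
  rw [lastEdgeIs_and_degIn_iff_prefixEdges ω hJ hu, ← edgeSet_subset_prefixEdges_iff ω hJs]
  refine and_congr_right fun hsub => (degIn_prefixEdges_eq_iff ω hJ hsub).trans ?_
  simp only [Nat.add_one_le_iff, Fin.lt_def]

lemma card_subtype_erase_edgeFinset (hJG : J ≤ G) {e : Sym2 V} (he : e ∈ J.edgeSet) :
    #((J.edgeFinset.erase e).subtype (· ∈ G.edgeFinset)) = #J.edgeFinset - 1 := by
  rw [card_subtype, filter_true_of_mem fun f hf => ?_, card_erase_of_mem (J.mem_edgeFinset.2 he)]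
  exact G.mem_edgeFinset.2 (SimpleGraph.edgeSet_mono hJG (J.mem_edgeFinset.1 (mem_of_mem_erase hf)))

lemma card_subtype_incidenceFinset_sdiff (hJG : J ≤ G) (hJ : J.IsRegularOfDegree δ) :
    #((G.incidenceFinset u \ J.incidenceFinset u).subtype (· ∈ G.edgeFinset)) =
      G.degree u - δ := by
  have hJu : J.incidenceFinset u ⊆ G.incidenceFinset u := fun e he => by
    rw [mem_incidenceFinset_iff] at he ⊢
    exact ⟨SimpleGraph.edgeSet_mono hJG he.1, he.2⟩
  rw [card_subtype, filter_true_of_mem fun e he => ?_, card_sdiff_of_subset hJu,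
    G.card_incidenceFinset_eq_degree, J.card_incidenceFinset_eq_degree, hJ.degree_eq]
  exact G.mem_edgeFinset.2 (mem_incidenceFinset_iff.1 (mem_sdiff.1 he).1).1

theorem ncard_lastEdgeIs_and_degIn_mul (hJG : J ≤ G) (hJ : J.IsRegularOfDegree δ) {v : V}
    (huv : J.Adj u v) :
    {ω : Fin #G.edgeFinset ≃ {e // e ∈ G.edgeFinset} |
        J.edgeSet ⊆ ↑(finalEdges δ ω) ∧ lastEdgeIs δ ω s(u, v) ∧
          degIn (finalEdges δ ω) u = δ}.ncard * (#J.edgeFinset + (G.degree u - δ)).factorial =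
      (#G.edgeFinset).factorial *
        ((#J.edgeFinset - 1).factorial * (G.degree u - δ).factorial) := by
  classical
  let x : {e // e ∈ G.edgeFinset} := ⟨s(u, v), G.mem_edgeFinset.2 (hJG huv)⟩
  have hxJ : s(u, v) ∈ J.incidenceFinset u :=
    mem_incidenceFinset_iff.2 ⟨huv, Sym2.mem_mk_left u v⟩
  have hBC : Disjoint ((J.edgeFinset.erase x).subtype (· ∈ G.edgeFinset))
      ((G.incidenceFinset u \ J.incidenceFinset u).subtype (· ∈ G.edgeFinset)) := by
    refine disjoint_left.2 fun y hyB hyC => ?_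
    rw [mem_subtype, mem_erase, SimpleGraph.mem_edgeFinset] at hyB
    rw [mem_subtype, mem_sdiff, mem_incidenceFinset_iff] at hyC
    exact hyC.2 (mem_incidenceFinset_iff.2 ⟨hyB.2, hyC.1.2⟩)
  have hcount := card_orderings_forall_lt_and_forall_lt_mul (Fintype.card_coe G.edgeFinset)
    (x := x) (by simp) (by simp [x, hxJ]) hBC
  have hpos : 0 < #J.edgeFinset := card_pos.2 ⟨_, J.mem_edgeFinset.2 (J.mem_edgeSet.2 huv)⟩
  rw [card_subtype_erase_edgeFinset hJG (J.mem_edgeSet.2 huv),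
    card_subtype_incidenceFinset_sdiff hJG hJ,
    show #J.edgeFinset - 1 + 1 + (G.degree u - δ) = #J.edgeFinset + (G.degree u - δ) by omega]
    at hcount
  rw [← hcount, ← coe_filter_univ, Set.ncard_coe_finset]
  congr 2
  exact filter_congr fun ω _ =>
    lastEdgeIs_and_degIn_iff_forall_lt hJG hJ ω (x := x) (Sym2.mem_mk_left u v)

end Graph

lemma factorial_pred_mul_factorial_div_factorial_add {h : ℕ} (hh : h ≠ 0) (d : ℕ) :
    ((h - 1).factorial : ℝ) * (d.factorial : ℝ) / ((h + d).factorial : ℝ) =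
      (1 / (h : ℝ)) * (1 / (((h + d).choose h : ℝ))) := by
  rw [Nat.cast_choose ℝ (Nat.le_add_right h d), Nat.add_sub_cancel_left,
    ← Nat.mul_factorial_pred hh]
  push_cast
  field_simp

theorem probability_subgraph_last_edge_and_low_degree_endpoint_general
    {V : Type*} [Fintype V] [DecidableEq V]
    (G J : SimpleGraph V) [DecidableRel G.Adj] [DecidableRel J.Adj]
    (δ : ℕ)
    (hJG : J ≤ G) (hJ : J.IsRegularOfDegree δ)
    (u v : V) (huv : J.Adj u v) (h : ℕ) (hh : h = J.edgeFinset.card) :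
    ({ω : Fin G.edgeFinset.card ≃ {e : Sym2 V // e ∈ G.edgeFinset} |
        J.edgeSet ⊆ ↑(finalEdges δ ω) ∧ lastEdgeIs δ ω s(u, v) ∧
          degIn (finalEdges δ ω) u = δ}.ncard : ℝ) /
      (Fintype.card (Fin G.edgeFinset.card ≃ {e : Sym2 V // e ∈ G.edgeFinset}) : ℝ) =
    ((h - 1).factorial : ℝ) * ((G.degree u - δ).factorial : ℝ) /
      ((h + (G.degree u - δ)).factorial : ℝ) ∧
    ((h - 1).factorial : ℝ) * ((G.degree u - δ).factorial : ℝ) /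
        ((h + (G.degree u - δ)).factorial : ℝ) =
      (1 / (h : ℝ)) * (1 / (((h + (G.degree u - δ)).choose h : ℝ))) := by
  subst hh
  have hpos : 0 < #J.edgeFinset := card_pos.2 ⟨_, J.mem_edgeFinset.2 (J.mem_edgeSet.2 huv)⟩
  refine ⟨?_, factorial_pred_mul_factorial_div_factorial_add hpos.ne' _⟩
  rw [Fintype.card_equiv G.edgeFinset.equivFin.symm, Fintype.card_fin,
    div_eq_div_iff (by positivity) (by positivity)]
  exact_mod_cast (ncard_lastEdgeIs_and_degIn_mul hJG hJ huv).trans (mul_comm _ _)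

/-- Let `G` be a finite simple graph with minimum degree at least `δ ≥ 1`, let `J` be a
`δ`-regular spanning subgraph of `G` with `h` edges, and let `uv` be an edge of `J`;
write `Δ(u) = deg_G(u) − δ`.  The probability that `J ⊆ G_ω`, `e_{k(ω)} = uv`, and `u` has
degree exactly `δ` in `G_ω` equals `(h−1)!·Δ(u)!/(h+Δ(u))!`, which in turn equals
`(1/h)·(1/C(h+Δ(u),h))`. -/
theorem probability_subgraph_last_edge_and_low_degree_endpoint
    {V : Type*} [Fintype V] [DecidableEq V]
    (G J : SimpleGraph V) [DecidableRel G.Adj] [DecidableRel J.Adj]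
    (δ : ℕ) (hδ : 1 ≤ δ) (hGdeg : ∀ w : V, δ ≤ G.degree w)
    (hJG : J ≤ G) (hJ : J.IsRegularOfDegree δ)
    (u v : V) (huv : J.Adj u v) (h : ℕ) (hh : h = J.edgeFinset.card) :
    ({ω : Fin G.edgeFinset.card ≃ {e : Sym2 V // e ∈ G.edgeFinset} |
        J.edgeSet ⊆ ↑(finalEdges δ ω) ∧ lastEdgeIs δ ω s(u, v) ∧
          degIn (finalEdges δ ω) u = δ}.ncard : ℝ) /
      (Fintype.card (Fin G.edgeFinset.card ≃ {e : Sym2 V // e ∈ G.edgeFinset}) : ℝ) =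
    ((h - 1).factorial : ℝ) * ((G.degree u - δ).factorial : ℝ) /
      ((h + (G.degree u - δ)).factorial : ℝ) ∧
    ((h - 1).factorial : ℝ) * ((G.degree u - δ).factorial : ℝ) /
        ((h + (G.degree u - δ)).factorial : ℝ) =
      (1 / (h : ℝ)) * (1 / (((h + (G.degree u - δ)).choose h : ℝ))) :=
  probability_subgraph_last_edge_and_low_degree_endpoint_general G J δ hJG hJ u v huv h hh
end

section
/- Let G be a finite simple graph in which every vertex has degree at least δ, where δ ≥ 1, let J be a spanning subgraph of G with minimum degree at least δ, and let ω be a permutation of the edges of G. If J ⊆ G_ω, then the edge e_{k(ω)} belongs to J, and e_{k(ω)} has an endpoint w whose degree in G_ω equals δ and all of whose G_ω-edges belong to J. -/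
open Finset

/-!
When the last edge `f = e_{k(ω)}` is added, some endpoint `w` of `f` reaches degree `δ`; before
it `w` had degree below `δ`, so `deg_{G_ω} w = δ`. As `J ⊆ G_ω` and `deg_J w ≥ δ`, the `J`-edges
at `w` already exhaust the `G_ω`-edges at `w`, among them `f`.
-/

section degIn

variable {V : Type*} [DecidableEq V]

lemma degIn_empty (v : V) : degIn ∅ v = 0 := rfl

lemma degIn_insert_of_notMem {s : Finset (Sym2 V)} {e : Sym2 V} {v : V} (hv : v ∉ e) :
    degIn (insert e s) v = degIn s v := by
  rw [degIn, degIn, filter_insert, if_neg hv]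

lemma degIn_insert_le (s : Finset (Sym2 V)) (e : Sym2 V) (v : V) :
    degIn (insert e s) v ≤ degIn s v + 1 := by
  rw [degIn, degIn, filter_insert]
  split_ifs
  · exact card_insert_le _ _
  · exact Nat.le_succ _

lemma degIn_edgeFinset_s11 [Fintype V] (G : SimpleGraph V) [DecidableRel G.Adj] (v : V) :
    degIn G.edgeFinset v = G.degree v := by
  rw [degIn, ← G.card_incidenceFinset_eq_degree, G.incidenceFinset_eq_filter]

lemma mem_edgeSet_of_degIn_le_degree [Fintype V] {J : SimpleGraph V} [DecidableRel J.Adj]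
    {s : Finset (Sym2 V)} (hJs : J.edgeSet ⊆ s) {w : V} (hw : degIn s w ≤ J.degree w)
    {e : Sym2 V} (he : e ∈ s) (hwe : w ∈ e) : e ∈ J.edgeSet := by
  have hsub : {e ∈ J.edgeFinset | w ∈ e} ⊆ {e ∈ s | w ∈ e} :=
    filter_subset_filter _ fun e he ↦ hJs (SimpleGraph.mem_edgeFinset.1 he)
  have hcard : #{e ∈ s | w ∈ e} ≤ #{e ∈ J.edgeFinset | w ∈ e} := by
    rwa [← degIn, ← degIn, degIn_edgeFinset_s11]
  have heJ : e ∈ {e ∈ J.edgeFinset | w ∈ e} := by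
    rw [eq_of_subset_of_card_le hsub hcard]
    exact mem_filter.2 ⟨he, hwe⟩
  exact SimpleGraph.mem_edgeFinset.1 (mem_filter.1 heJ).1

end degIn

section prefixEdges

variable {V : Type*} [DecidableEq V] {s : Finset (Sym2 V)}
  (ω : Fin s.card ≃ {e : Sym2 V // e ∈ s})

lemma mem_prefixEdges {i : ℕ} {e : Sym2 V} :
    e ∈ prefixEdges ω i ↔ ∃ j : Fin s.card, (j : ℕ) < i ∧ (ω j : Sym2 V) = e := by
  simp [prefixEdges]

lemma prefixEdges_zero : prefixEdges ω 0 = ∅ := by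
  ext e
  simp [mem_prefixEdges]

lemma prefixEdges_card : prefixEdges ω s.card = s := by
  ext e
  refine ⟨fun he ↦ ?_, fun he ↦ ?_⟩
  · obtain ⟨j, -, rfl⟩ := (mem_prefixEdges ω).1 he
    exact (ω j).2
  · exact (mem_prefixEdges ω).2 ⟨ω.symm ⟨e, he⟩, (ω.symm ⟨e, he⟩).2, by simp⟩

lemma coe_apply_notMem_prefixEdges (j : Fin s.card) : (ω j : Sym2 V) ∉ prefixEdges ω j := by
  rintro h
  obtain ⟨i, hij, hi⟩ := (mem_prefixEdges ω).1 h
  rw [ω.injective (Subtype.ext hi)] at hij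
  exact lt_irrefl _ hij

lemma prefixEdges_succ (j : Fin s.card) :
    prefixEdges ω (j + 1) = insert (ω j : Sym2 V) (prefixEdges ω j) := by
  ext e
  simp only [mem_insert, mem_prefixEdges]
  constructor
  · rintro ⟨i, hi, rfl⟩
    rcases (Nat.lt_succ_iff_lt_or_eq.1 hi) with hi | hi
    · exact Or.inr ⟨i, hi, rfl⟩
    · exact Or.inl (by rw [Fin.ext hi])
  · rintro (rfl | ⟨i, hi, rfl⟩)
    · exact ⟨j, Nat.lt_succ_self _, rfl⟩
    · exact ⟨i, Nat.lt_succ_of_lt hi, rfl⟩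

end prefixEdges

section stopIndex

variable {V : Type*} [DecidableEq V] [Fintype V] {δ : ℕ} {s : Finset (Sym2 V)}
  {ω : Fin s.card ≃ {e : Sym2 V // e ∈ s}}

lemma stopIndex_le_card (hs : ∀ v, δ ≤ degIn s v) : stopIndex δ ω ≤ s.card :=
  Nat.sInf_le fun v ↦ (prefixEdges_card ω).symm ▸ hs v

lemma le_degIn_finalEdges (hs : ∀ v, δ ≤ degIn s v) (v : V) :
    δ ≤ degIn (finalEdges δ ω) v :=
  Nat.sInf_mem (s := {i | ∀ v, δ ≤ degIn (prefixEdges ω i) v})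
    ⟨s.card, fun v ↦ (prefixEdges_card ω).symm ▸ hs v⟩ v

lemma stopIndex_pos [Nonempty V] (hδ : 1 ≤ δ) (hs : ∀ v, δ ≤ degIn s v) :
    0 < stopIndex δ ω := by
  refine Nat.pos_of_ne_zero fun h ↦ ?_
  have := le_degIn_finalEdges (ω := ω) hs (Classical.arbitrary V)
  rw [finalEdges, h, prefixEdges_zero, degIn_empty] at this
  omega

lemma exists_degIn_lt_of_lt_stopIndex {i : ℕ} (hi : i < stopIndex δ ω) :
    ∃ w, degIn (prefixEdges ω i) w < δ := by
  simpa using Nat.notMem_of_lt_sInf hi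

lemma exists_lastEdgeIs_degIn_finalEdges_eq [Nonempty V] (hδ : 1 ≤ δ)
    (hs : ∀ v, δ ≤ degIn s v) :
    ∃ f, lastEdgeIs δ ω f ∧ ∃ w ∈ f, degIn (finalEdges δ ω) w = δ := by
  have hpos := stopIndex_pos (ω := ω) hδ hs
  have hle := stopIndex_le_card (ω := ω) hs
  obtain ⟨j, hj⟩ : ∃ j : Fin s.card, stopIndex δ ω = j + 1 :=
    ⟨⟨stopIndex δ ω - 1, by omega⟩, by rw [Fin.val_mk]; omega⟩
  have hfinal : finalEdges δ ω = insert (ω j : Sym2 V) (prefixEdges ω j) := by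
    rw [finalEdges, hj, prefixEdges_succ]
  obtain ⟨w, hw⟩ := exists_degIn_lt_of_lt_stopIndex (show (j : ℕ) < stopIndex δ ω by omega)
  have hwδ := le_degIn_finalEdges (ω := ω) hs w
  have hwf : w ∈ (ω j : Sym2 V) := by
    by_contra hwf
    rw [hfinal, degIn_insert_of_notMem hwf] at hwδ
    omega
  refine ⟨ω j, ⟨?_, ?_⟩, w, hwf, ?_⟩
  · exact (mem_prefixEdges ω).2 ⟨j, by omega, rfl⟩
  · rw [hj, Nat.add_sub_cancel]
    exact coe_apply_notMem_prefixEdges ω j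
  · have := degIn_insert_le (prefixEdges ω j) (ω j) w
    rw [← hfinal] at this
    omega

end stopIndex

theorem last_edge_in_subgraph_and_tight_endpoint_general
    {V : Type*} [Fintype V] [DecidableEq V] [Nonempty V]
    (G J : SimpleGraph V) [DecidableRel G.Adj] [DecidableRel J.Adj]
    (δ : ℕ) (hδ : 1 ≤ δ) (hGdeg : ∀ w : V, δ ≤ G.degree w)
    (hJdeg : ∀ w : V, δ ≤ J.degree w)
    (ω : Fin G.edgeFinset.card ≃ {e : Sym2 V // e ∈ G.edgeFinset})
    (hsub : J.edgeSet ⊆ ↑(finalEdges δ ω)) :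
    ∃ f : Sym2 V, lastEdgeIs δ ω f ∧ f ∈ J.edgeSet ∧
      ∃ w ∈ f, degIn (finalEdges δ ω) w = δ ∧
        ∀ e ∈ finalEdges δ ω, w ∈ e → e ∈ J.edgeSet := by
  have hGs : ∀ v, δ ≤ degIn G.edgeFinset v := fun v ↦ degIn_edgeFinset_s11 G v ▸ hGdeg v
  obtain ⟨f, hlast, w, hwf, hdeg⟩ := exists_lastEdgeIs_degIn_finalEdges_eq (ω := ω) hδ hGs
  have hsat : ∀ e ∈ finalEdges δ ω, w ∈ e → e ∈ J.edgeSet := fun e he hwe ↦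
    mem_edgeSet_of_degIn_le_degree hsub (hdeg.le.trans (hJdeg w)) he hwe
  exact ⟨f, hlast, hsat f hlast.1 hwf, w, hwf, hdeg, hsat⟩

/-- Let `G` be a finite simple graph with minimum degree at least `δ ≥ 1`, let `J` be a
spanning subgraph of `G` with minimum degree at least `δ`, and let `ω` be an ordering of
the edges of `G`.  If `J ⊆ G_ω`, then the edge `e_{k(ω)}` belongs to `J`, and it has an
endpoint `w` whose degree in `G_ω` equals `δ` and all of whose `G_ω`-edges belong
to `J`. -/
theorem last_edge_in_subgraph_and_tight_endpoint
    {V : Type*} [Fintype V] [DecidableEq V] [Nonempty V]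
    (G J : SimpleGraph V) [DecidableRel G.Adj] [DecidableRel J.Adj]
    (δ : ℕ) (hδ : 1 ≤ δ) (hGdeg : ∀ w : V, δ ≤ G.degree w)
    (hJG : J ≤ G) (hJdeg : ∀ w : V, δ ≤ J.degree w)
    (ω : Fin G.edgeFinset.card ≃ {e : Sym2 V // e ∈ G.edgeFinset})
    (hsub : J.edgeSet ⊆ ↑(finalEdges δ ω)) :
    ∃ f : Sym2 V, lastEdgeIs δ ω f ∧ f ∈ J.edgeSet ∧
      ∃ w ∈ f, degIn (finalEdges δ ω) w = δ ∧
        ∀ e ∈ finalEdges δ ω, w ∈ e → e ∈ J.edgeSet :=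
  last_edge_in_subgraph_and_tight_endpoint_general G J δ hδ hGdeg hJdeg ω hsub
end
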